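/- Let α > 0 and θ > 2. Every coefficient array β satisfying the condition A^α_θ satisfies the weak Besov condition W_{2/(1+2α)}. -/

import Mathlib

/-! For `u ≥ 1` Chebyshev's inequality against `Σ β_{j,k}²` already gives the bound. For
`u < 1` pick `J` with `2^J ≈ u^{-2/(1+2α)}`. The levels below `J` hold fewer than `2^J`
coefficients in all. At a level `j ≥ J`, every coefficient exceeding `u` that is not among the
`N(J,j)` largest contributes at least `u²` to `t_{j,J}(β)`, so that level has at most
`N(J,j) + t_{j,J}(β)/u²` of them. As `θ ≥ 2`, `Σ_{j≥J} N(J,j) ≤ 2·2^J`, and `A^α_θ` bounds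
`Σ_{j≥J} t_{j,J}(β)` by `C 2^{-2Jα}`; with this choice of `J` both totals are
`O(u^{-2/(1+2α)})`. Square-summability makes the set of large coefficients finite. -/

open scoped BigOperators

/-- A coefficient array `β` is square-summable if `Σ_{j,k} β_{j,k}² < ∞`. -/
def SqSummable (β : ℕ → ℕ → ℝ) : Prop :=
  Summable fun j : ℕ => ∑ k ∈ Finset.range (2 ^ j), (β j k) ^ 2

/-- `N(J,j) = min(⌊2^J (j−J+1)^{−θ}⌋, 2^j)`. -/
noncomputable def NJj (θ : ℝ) (J j : ℕ) : ℕ :=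
  min ⌊(2 : ℝ) ^ J * ((j : ℝ) - (J : ℝ) + 1) ^ (-θ)⌋₊ (2 ^ j)

/-- `t_{j,J}(β)`: the minimum over subsets `A` of `{0,…,2^j−1}` of cardinality `N(J,j)`
of `Σ_{k ∉ A} β_{j,k}²`, i.e. the sum of squares of all but the `N(J,j)` largest
`|β_{j,k}|` at level `j`. -/
noncomputable def tTail (β : ℕ → ℕ → ℝ) (θ : ℝ) (J j : ℕ) : ℝ :=
  sInf {x : ℝ | ∃ A : Finset ℕ, A ⊆ Finset.range (2 ^ j) ∧ A.card = NJj θ J j ∧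
    x = ∑ k ∈ Finset.range (2 ^ j) \ A, (β j k) ^ 2}

/-- The condition `A^α_θ`. -/
def CondA (β : ℕ → ℕ → ℝ) (α θ : ℝ) : Prop :=
  ∃ C : ℝ, ∀ J : ℕ,
    (2 : ℝ) ^ (2 * (J : ℝ) * α) *
      ∑' j : ℕ, (if J ≤ j then tTail β θ J j else 0) ≤ C

/-- The weak Besov condition `W_{2/(1+2α)}`. -/
def CondW (β : ℕ → ℕ → ℝ) (α : ℝ) : Prop :=
  ∃ C : ℝ, ∀ u : ℝ, 0 < u →
    {q : ℕ × ℕ | q.2 < 2 ^ q.1 ∧ u < |β q.1 q.2|}.Finite ∧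
      u ^ (2 / (1 + 2 * α)) *
        ({q : ℕ × ℕ | q.2 < 2 ^ q.1 ∧ u < |β q.1 q.2|}.ncard : ℝ) ≤ C

open Finset

lemma card_filter_lt_abs_mul_sq_le {ι : Type*} [DecidableEq ι] (s A : Finset ι) (f : ι → ℝ)
    {u : ℝ} (hu : 0 ≤ u) :
    (#(s.filter fun k => u < |f k|) : ℝ) * u ^ 2 ≤ #A * u ^ 2 + ∑ k ∈ s \ A, f k ^ 2 := by
  set B := s.filter fun k => u < |f k|
  have hcard : (#B : ℝ) ≤ #(B \ A) + #A := by exact_mod_cast card_le_card_sdiff_add_card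
  have hsum : (#(B \ A) : ℝ) * u ^ 2 ≤ ∑ k ∈ s \ A, f k ^ 2 :=
    calc (#(B \ A) : ℝ) * u ^ 2 = ∑ _k ∈ B \ A, u ^ 2 := by rw [sum_const, nsmul_eq_mul]
      _ ≤ ∑ k ∈ B \ A, f k ^ 2 := sum_le_sum fun k hk => by
          rw [← sq_abs (f k)]
          exact pow_le_pow_left₀ hu (mem_filter.mp (mem_sdiff.mp hk).1).2.le 2
      _ ≤ ∑ k ∈ s \ A, f k ^ 2 :=
          sum_le_sum_of_subset_of_nonneg (sdiff_subset_sdiff (filter_subset _ _) le_rfl)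
            fun _ _ _ => sq_nonneg _
  calc (#B : ℝ) * u ^ 2 ≤ (#(B \ A) + #A) * u ^ 2 := by gcongr
    _ ≤ #A * u ^ 2 + ∑ k ∈ s \ A, f k ^ 2 := by linarith

lemma sum_range_inv_succ_sq_le_two (n : ℕ) : ∑ k ∈ range n, (((k + 1 : ℕ) : ℝ) ^ 2)⁻¹ ≤ 2 := by
  have h := sum_Ioo_inv_sq_le (α := ℝ) 0 (n + 1)
  rw [← Ico_add_one_left_eq_Ioo, zero_add] at h
  rw [range_eq_Ico, sum_Ico_add' (fun i : ℕ => ((i : ℝ) ^ 2)⁻¹)]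
  simpa using h

lemma tTail_set_nonempty (β : ℕ → ℕ → ℝ) (θ : ℝ) (J j : ℕ) :
    {x : ℝ | ∃ A : Finset ℕ, A ⊆ range (2 ^ j) ∧ #A = NJj θ J j ∧
      x = ∑ k ∈ range (2 ^ j) \ A, β j k ^ 2}.Nonempty := by
  obtain ⟨A, hA, hcard⟩ := exists_subset_card_eq
    (show NJj θ J j ≤ #(range (2 ^ j)) by rw [card_range]; exact min_le_right _ _)
  exact ⟨_, A, hA, hcard, rfl⟩

lemma le_tTail {β : ℕ → ℕ → ℝ} {θ : ℝ} {J j : ℕ} {c : ℝ}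
    (hc : ∀ A ⊆ range (2 ^ j), #A = NJj θ J j → c ≤ ∑ k ∈ range (2 ^ j) \ A, β j k ^ 2) :
    c ≤ tTail β θ J j :=
  le_csInf (tTail_set_nonempty β θ J j) fun _ ⟨A, hA, hcard, hx⟩ => hx ▸ hc A hA hcard

lemma tTail_nonneg (β : ℕ → ℕ → ℝ) (θ : ℝ) (J j : ℕ) : 0 ≤ tTail β θ J j :=
  le_tTail fun _ _ _ => sum_nonneg fun _ _ => sq_nonneg _

lemma tTail_le {β : ℕ → ℕ → ℝ} {θ : ℝ} {J j : ℕ} {A : Finset ℕ} (hA : A ⊆ range (2 ^ j))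
    (hcard : #A = NJj θ J j) : tTail β θ J j ≤ ∑ k ∈ range (2 ^ j) \ A, β j k ^ 2 := by
  refine csInf_le ⟨0, ?_⟩ ⟨A, hA, hcard, rfl⟩
  rintro _ ⟨A', -, -, rfl⟩
  exact sum_nonneg fun _ _ => sq_nonneg _

lemma tTail_le_sum_sq (β : ℕ → ℕ → ℝ) (θ : ℝ) (J j : ℕ) :
    tTail β θ J j ≤ ∑ k ∈ range (2 ^ j), β j k ^ 2 := by
  obtain ⟨_, A, hA, hcard, -⟩ := tTail_set_nonempty β θ J j
  exact (tTail_le hA hcard).trans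
    (sum_le_sum_of_subset_of_nonneg sdiff_subset fun _ _ _ => sq_nonneg _)

lemma summable_tTail {β : ℕ → ℕ → ℝ} (hβ : SqSummable β) (θ : ℝ) (J : ℕ) :
    Summable fun j => if J ≤ j then tTail β θ J j else 0 := by
  refine hβ.of_nonneg_of_le (fun j => ite_nonneg (tTail_nonneg β θ J j) le_rfl) fun j => ?_
  split_ifs
  exacts [tTail_le_sum_sq β θ J j, sum_nonneg fun _ _ => sq_nonneg _]

lemma NJj_add_le {θ : ℝ} (hθ : 2 ≤ θ) (J k : ℕ) :
    (NJj θ J (J + k) : ℝ) ≤ 2 ^ J * (((k + 1 : ℕ) : ℝ) ^ 2)⁻¹ := by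
  have hbase : ((J + k : ℕ) : ℝ) - J + 1 = ((k + 1 : ℕ) : ℝ) := by push_cast; ring
  have hone : (1 : ℝ) ≤ ((k + 1 : ℕ) : ℝ) := by exact_mod_cast Nat.le_add_left 1 k
  calc (NJj θ J (J + k) : ℝ) ≤ 2 ^ J * ((k + 1 : ℕ) : ℝ) ^ (-θ) := by
        rw [← hbase]
        exact (Nat.cast_le.mpr (min_le_left _ _)).trans (Nat.floor_le (by rw [hbase]; positivity))
    _ ≤ 2 ^ J * ((k + 1 : ℕ) : ℝ) ^ (-2 : ℝ) := by
        gcongr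
    _ = 2 ^ J * (((k + 1 : ℕ) : ℝ) ^ 2)⁻¹ := by
        rw [Real.rpow_neg (by positivity), Real.rpow_two]

lemma sum_Ico_NJj_le {θ : ℝ} (hθ : 2 ≤ θ) (J M : ℕ) :
    ∑ j ∈ Ico J M, (NJj θ J j : ℝ) ≤ 2 * 2 ^ J := by
  rw [sum_Ico_eq_sum_range]
  calc ∑ k ∈ range (M - J), (NJj θ J (J + k) : ℝ)
      ≤ ∑ k ∈ range (M - J), 2 ^ J * (((k + 1 : ℕ) : ℝ) ^ 2)⁻¹ :=
        sum_le_sum fun k _ => NJj_add_le hθ J k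
    _ ≤ 2 ^ J * 2 := by
        rw [← mul_sum]
        exact mul_le_mul_of_nonneg_left (sum_range_inv_succ_sq_le_two _) (by positivity)
    _ = 2 * 2 ^ J := mul_comm _ _

noncomputable def largeCoeffs (β : ℕ → ℕ → ℝ) (u : ℝ) (j : ℕ) : Finset ℕ :=
  (range (2 ^ j)).filter fun k => u < |β j k|

section LargeCoeffs

variable {β : ℕ → ℕ → ℝ} {u : ℝ}

lemma card_largeCoeffs_mul_sq_le_sum_sq (hu : 0 ≤ u) (j : ℕ) :
    (#(largeCoeffs β u j) : ℝ) * u ^ 2 ≤ ∑ k ∈ range (2 ^ j), β j k ^ 2 := by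
  simpa [largeCoeffs] using card_filter_lt_abs_mul_sq_le (range (2 ^ j)) ∅ (β j) hu

lemma card_largeCoeffs_mul_sq_le_tTail (hu : 0 ≤ u) (θ : ℝ) (J j : ℕ) :
    (#(largeCoeffs β u j) : ℝ) * u ^ 2 ≤ NJj θ J j * u ^ 2 + tTail β θ J j := by
  rw [← sub_le_iff_le_add']
  refine le_tTail fun A _ hcard => ?_
  rw [sub_le_iff_le_add', ← hcard]
  exact card_filter_lt_abs_mul_sq_le _ A (β j) hu

lemma largeCoeffs_eq_empty (hu : 0 ≤ u) {j : ℕ} (hj : ∑ k ∈ range (2 ^ j), β j k ^ 2 < u ^ 2) :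
    largeCoeffs β u j = ∅ := by
  have hlt := (card_largeCoeffs_mul_sq_le_sum_sq hu j).trans_lt hj
  rw [← card_eq_zero, ← Nat.lt_one_iff, ← Nat.cast_lt (α := ℝ), Nat.cast_one]
  exact lt_of_mul_lt_mul_right (by rwa [one_mul]) (sq_nonneg u)

end LargeCoeffs

noncomputable def tailSum (β : ℕ → ℕ → ℝ) (θ : ℝ) (J : ℕ) : ℝ :=
  ∑' j, if J ≤ j then tTail β θ J j else 0

lemma tailSum_nonneg (β : ℕ → ℕ → ℝ) (θ : ℝ) (J : ℕ) : 0 ≤ tailSum β θ J :=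
  tsum_nonneg fun j => ite_nonneg (tTail_nonneg β θ J j) le_rfl

lemma sum_Ico_tTail_le_tailSum {β : ℕ → ℕ → ℝ} (hβ : SqSummable β) (θ : ℝ) (J M : ℕ) :
    ∑ j ∈ Ico J M, tTail β θ J j ≤ tailSum β θ J := by
  calc ∑ j ∈ Ico J M, tTail β θ J j = ∑ j ∈ Ico J M, if J ≤ j then tTail β θ J j else 0 :=
        sum_congr rfl fun j hj => (if_pos (mem_Ico.mp hj).1).symm
    _ ≤ tailSum β θ J :=
        (summable_tTail hβ θ J).sum_le_tsum _ fun j _ => ite_nonneg (tTail_nonneg β θ J j) le_rfl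

section Counting

variable {β : ℕ → ℕ → ℝ} {u : ℝ}

lemma exists_ncard_le_sum_card_largeCoeffs (hβ : SqSummable β) (hu : 0 < u) :
    ∃ M, {q : ℕ × ℕ | q.2 < 2 ^ q.1 ∧ u < |β q.1 q.2|}.Finite ∧
      {q : ℕ × ℕ | q.2 < 2 ^ q.1 ∧ u < |β q.1 q.2|}.ncard ≤
        ∑ j ∈ range M, #(largeCoeffs β u j) := by
  obtain ⟨M, hM⟩ := Filter.eventually_atTop.mp
    (hβ.tendsto_atTop_zero.eventually_lt_const (pow_pos hu 2))
  set F := (range M).biUnion fun j => {j} ×ˢ largeCoeffs β u j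
  have hsub : {q : ℕ × ℕ | q.2 < 2 ^ q.1 ∧ u < |β q.1 q.2|} ⊆ F := by
    rintro ⟨j, k⟩ ⟨hk, hbig⟩
    have hk' : k ∈ largeCoeffs β u j := mem_filter.mpr ⟨mem_range.mpr hk, hbig⟩
    have hj : j < M := by
      by_contra! hj
      simp [largeCoeffs_eq_empty hu.le (hM j hj)] at hk'
    exact mem_coe.mpr (mem_biUnion.mpr
      ⟨j, mem_range.mpr hj, mem_product.mpr ⟨mem_singleton_self j, hk'⟩⟩)
  refine ⟨M, F.finite_toSet.subset hsub, ?_⟩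
  calc _ ≤ (F : Set (ℕ × ℕ)).ncard := Set.ncard_le_ncard hsub F.finite_toSet
    _ = #F := Set.ncard_coe_finset F
    _ ≤ ∑ j ∈ range M, #({j} ×ˢ largeCoeffs β u j) := card_biUnion_le
    _ = ∑ j ∈ range M, #(largeCoeffs β u j) := by simp

lemma sum_card_largeCoeffs_le (hβ : SqSummable β) {θ : ℝ} (hθ : 2 ≤ θ) (hu : 0 < u)
    (J M : ℕ) :
    ∑ j ∈ range M, (#(largeCoeffs β u j) : ℝ) ≤ 3 * 2 ^ J + tailSum β θ J / u ^ 2 := by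
  have hlow : ∑ j ∈ (range M).filter (· < J), (#(largeCoeffs β u j) : ℝ) ≤ 2 ^ J := by
    have : ∑ j ∈ (range M).filter (· < J), #(largeCoeffs β u j) < 2 ^ J :=
      (sum_le_sum fun j _ => (card_filter_le _ _).trans (card_range _).le).trans_lt
        (Nat.geomSum_lt le_rfl fun j hj => (mem_filter.mp hj).2)
    exact_mod_cast this.le
  have hhigh : (range M).filter (fun j => ¬ j < J) = Ico J M := by
    ext j
    simp only [mem_filter, mem_range, mem_Ico]
    omega
  have hlevel (j : ℕ) : (#(largeCoeffs β u j) : ℝ) ≤ NJj θ J j + tTail β θ J j / u ^ 2 := by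
    have hu2 : 0 < u ^ 2 := by positivity
    have h := card_largeCoeffs_mul_sq_le_tTail (β := β) hu.le θ J j
    rwa [← le_div_iff₀ hu2, add_div, mul_div_cancel_right₀ _ hu2.ne'] at h
  rw [← sum_filter_add_sum_filter_not (range M) (· < J), hhigh]
  calc _ ≤ 2 ^ J + ∑ j ∈ Ico J M, ((NJj θ J j : ℝ) + tTail β θ J j / u ^ 2) :=
        add_le_add hlow (sum_le_sum fun j _ => hlevel j)
    _ = 2 ^ J + ∑ j ∈ Ico J M, (NJj θ J j : ℝ) + (∑ j ∈ Ico J M, tTail β θ J j) / u ^ 2 := by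
        rw [sum_add_distrib, sum_div, add_assoc]
    _ ≤ 2 ^ J + 2 * 2 ^ J + tailSum β θ J / u ^ 2 := by
        gcongr
        exacts [sum_Ico_NJj_le hθ J M, sum_Ico_tTail_le_tailSum hβ θ J M]
    _ = 3 * 2 ^ J + tailSum β θ J / u ^ 2 := by ring

end Counting

section Regimes

variable {β : ℕ → ℕ → ℝ} {u : ℝ}

lemma rpow_mul_sum_card_largeCoeffs_le_of_one_le (hβ : SqSummable β) {p : ℝ} (hp : p ≤ 2)
    (hu : 1 ≤ u) (M : ℕ) :
    u ^ p * ∑ j ∈ range M, (#(largeCoeffs β u j) : ℝ) ≤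
      ∑' j, ∑ k ∈ range (2 ^ j), β j k ^ 2 :=
  calc u ^ p * ∑ j ∈ range M, (#(largeCoeffs β u j) : ℝ)
      ≤ u ^ 2 * ∑ j ∈ range M, (#(largeCoeffs β u j) : ℝ) := by
        gcongr
        exact (Real.rpow_le_rpow_of_exponent_le hu hp).trans_eq (Real.rpow_two u)
    _ = ∑ j ∈ range M, (#(largeCoeffs β u j) : ℝ) * u ^ 2 := by rw [← sum_mul, mul_comm]
    _ ≤ ∑ j ∈ range M, ∑ k ∈ range (2 ^ j), β j k ^ 2 :=
        sum_le_sum fun j _ => card_largeCoeffs_mul_sq_le_sum_sq (by positivity) j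
    _ ≤ ∑' j, ∑ k ∈ range (2 ^ j), β j k ^ 2 :=
        hβ.sum_le_tsum _ fun j _ => sum_nonneg fun _ _ => sq_nonneg _

lemma rpow_mul_sum_card_largeCoeffs_le_of_lt_one (hβ : SqSummable β) {α θ C : ℝ} (hα : 0 < α)
    (hθ : 2 ≤ θ) (hC : ∀ J : ℕ, (2 : ℝ) ^ (2 * (J : ℝ) * α) * tailSum β θ J ≤ C)
    (hu0 : 0 < u) (hu1 : u < 1) (M : ℕ) :
    u ^ (2 / (1 + 2 * α)) * ∑ j ∈ range M, (#(largeCoeffs β u j) : ℝ) ≤ 6 + C := by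
  set r := 2 / (1 + 2 * α)
  have hr : r + 2 * α * r = 2 := by
    simp only [r]
    field_simp
  set v := u ^ (-r)
  have hv : 1 < v := Real.one_lt_rpow_of_pos_of_lt_one_of_neg hu0 hu1 (by
    simp only [r, neg_lt_zero]
    positivity)
  -- `J := n + 1` satisfies `v < 2 ^ J ≤ 2 * v`.
  obtain ⟨n, hn, hn'⟩ := exists_nat_pow_near hv.le one_lt_two
  have hT : tailSum β θ (n + 1) ≤ C * u ^ (2 * α * r) := by
    have hpow : u ^ (-(2 * α * r)) ≤ (2 : ℝ) ^ (2 * ((n + 1 : ℕ) : ℝ) * α) := by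
      rw [show -(2 * α * r) = -r * (2 * α) by ring, Real.rpow_mul hu0.le,
        show 2 * ((n + 1 : ℕ) : ℝ) * α = ((n + 1 : ℕ) : ℝ) * (2 * α) by ring,
        Real.rpow_mul zero_le_two, Real.rpow_natCast]
      gcongr
    have hscaled : u ^ (-(2 * α * r)) * tailSum β θ (n + 1) ≤ C :=
      (mul_le_mul_of_nonneg_right hpow (tailSum_nonneg β θ (n + 1))).trans (hC (n + 1))
    calc tailSum β θ (n + 1) = u ^ (2 * α * r) * (u ^ (-(2 * α * r)) * tailSum β θ (n + 1)) := by
          rw [← mul_assoc, ← Real.rpow_add hu0, add_neg_cancel, Real.rpow_zero, one_mul]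
      _ ≤ u ^ (2 * α * r) * C := by gcongr
      _ = C * u ^ (2 * α * r) := mul_comm _ _
  calc u ^ r * ∑ j ∈ range M, (#(largeCoeffs β u j) : ℝ)
      ≤ u ^ r * (3 * 2 ^ (n + 1) + tailSum β θ (n + 1) / u ^ 2) := by
        gcongr
        exact sum_card_largeCoeffs_le hβ hθ hu0 (n + 1) M
    _ ≤ u ^ r * (3 * (2 * v) + C * u ^ (2 * α * r) / u ^ 2) := by
        gcongr
        rw [pow_succ, mul_comm]
        gcongr
    _ = 6 * (u ^ r * v) + C * (u ^ r * u ^ (2 * α * r) / u ^ 2) := by ring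
    _ = 6 + C := by
        rw [← Real.rpow_add hu0, add_neg_cancel, Real.rpow_zero, ← Real.rpow_add hu0, hr,
          Real.rpow_two, div_self (by positivity), mul_one, mul_one]

end Regimes

/-- the inclusion `A^α_θ ⊆ W_{2/(1+2α)}`. -/
theorem stmt_11 (α θ : ℝ) (hα : 0 < α) (hθ : 2 < θ)
    (β : ℕ → ℕ → ℝ) (hβ : SqSummable β) (hA : CondA β α θ) :
    CondW β α := by
  obtain ⟨C, hC⟩ := hA
  have hC0 : 0 ≤ C := (mul_nonneg (by positivity) (tailSum_nonneg β θ 0)).trans (hC 0)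
  have hS0 : 0 ≤ ∑' j, ∑ k ∈ range (2 ^ j), β j k ^ 2 :=
    tsum_nonneg fun j => sum_nonneg fun _ _ => sq_nonneg _
  refine ⟨(∑' j, ∑ k ∈ range (2 ^ j), β j k ^ 2) + 6 + C, fun u hu => ?_⟩
  obtain ⟨M, hfin, hcard⟩ := exists_ncard_le_sum_card_largeCoeffs hβ hu
  refine ⟨hfin, ?_⟩
  calc u ^ (2 / (1 + 2 * α)) * ({q : ℕ × ℕ | q.2 < 2 ^ q.1 ∧ u < |β q.1 q.2|}.ncard : ℝ)
      ≤ u ^ (2 / (1 + 2 * α)) * ∑ j ∈ range M, (#(largeCoeffs β u j) : ℝ) := by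
        gcongr
        exact_mod_cast hcard
    _ ≤ (∑' j, ∑ k ∈ range (2 ^ j), β j k ^ 2) + 6 + C := by
        rcases le_or_gt 1 u with hu1 | hu1
        · have hr : 2 / (1 + 2 * α) ≤ 2 := div_le_self zero_le_two (by linarith)
          linarith [rpow_mul_sum_card_largeCoeffs_le_of_one_le hβ hr hu1 M]
        · linarith [rpow_mul_sum_card_largeCoeffs_le_of_lt_one hβ hα hθ.le hC hu hu1 M]
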